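/- arXiv:math/0509616 — 7 statements merged into one kernel-verified Lean document; each statement's English description precedes it below -/
import Mathlib

section
/- In any Kripke model on a directed partial pre-order, every formula φ satisfies at each world exactly one of: ◇□φ holds (φ is a button), ◇□¬φ holds and ◇□φ fails (¬φ is a button and φ is not), or both ◇¬φ and ◇φ are necessary (φ is a switch); moreover these three cases are mutually exclusive when 'button' is taken as ◇□φ, 'negation of a button' as ◇□¬φ, and 'switch' as □◇φ ∧ □◇¬φ. -/
/-!
In every Kripke model `□◇¬φ` is equivalent to `¬◇□φ` and `□◇φ` to `¬◇□¬φ`, so `φ` is a switch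
exactly when neither `φ` nor `¬φ` is a button. Directedness rules out that both are buttons:
common successors of the two witnessing worlds would satisfy both `φ` and `¬φ`.
-/

/-- Modal formulas over propositional variables of type `α`. -/
inductive ModalFormula (α : Type) : Type
  | var : α → ModalFormula α
  | fls : ModalFormula α
  | imp : ModalFormula α → ModalFormula α → ModalFormula α
  | box : ModalFormula α → ModalFormula α

namespace ModalFormula

variable {α : Type}

def neg (φ : ModalFormula α) : ModalFormula α := φ.imp fls
def dia (φ : ModalFormula α) : ModalFormula α := (φ.neg.box).neg
def conj (φ ψ : ModalFormula α) : ModalFormula α := (φ.imp ψ.neg).neg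
def disj (φ ψ : ModalFormula α) : ModalFormula α := φ.neg.imp ψ

/-- Kripke satisfaction at a world, for a model with worlds `W`,
accessibility `R` and valuation `V`. -/
def sat {W : Type} (R : W → W → Prop) (V : α → W → Prop) : W → ModalFormula α → Prop
  | w, var p => V p w
  | _, fls => False
  | w, imp φ ψ => sat R V w φ → sat R V w ψ
  | w, box φ => ∀ v, R w v → sat R V v φ

end ModalFormula

open ModalFormula

namespace ModalFormula

variable {W α : Type} {R : W → W → Prop} {V : α → W → Prop} {w : W} {ψ : ModalFormula α}

@[simp]
theorem sat_neg : sat R V w ψ.neg ↔ ¬ sat R V w ψ := Iff.rfl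

@[simp]
theorem sat_box : sat R V w ψ.box ↔ ∀ v, R w v → sat R V v ψ := Iff.rfl

@[simp]
theorem sat_dia : sat R V w ψ.dia ↔ ∃ v, R w v ∧ sat R V v ψ := by
  simp [dia]

theorem sat_neg_dia_box_iff_not_sat_box_dia :
    sat R V w ψ.neg.dia.box ↔ ¬ sat R V w ψ.box.dia := by
  simp

theorem sat_dia_box_iff_not_sat_neg_box_dia :
    sat R V w ψ.dia.box ↔ ¬ sat R V w ψ.neg.box.dia := by
  simp

theorem not_sat_box_dia_and_neg_box_dia (hdir : ∀ u v, R w u → R w v → ∃ z, R u z ∧ R v z) :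
    ¬ (sat R V w ψ.box.dia ∧ sat R V w ψ.neg.box.dia) := by
  rintro ⟨h, h'⟩
  obtain ⟨u, hwu, hu⟩ := sat_dia.mp h
  obtain ⟨v, hwv, hv⟩ := sat_dia.mp h'
  obtain ⟨z, huz, hvz⟩ := hdir u v hwu hwv
  exact hv z hvz (hu z huz)

end ModalFormula

theorem button_negbutton_or_switch_general {W α : Type} (R : W → W → Prop)
    (hdir : ∀ w u v, R w u → R w v → ∃ z, R u z ∧ R v z)
    (V : α → W → Prop) (φ : ModalFormula α) (w : W) :
    (ModalFormula.sat R V w (φ.box.dia) ∧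
       ¬ ModalFormula.sat R V w (φ.neg.box.dia) ∧
       ¬ (ModalFormula.sat R V w (φ.dia.box) ∧
            ModalFormula.sat R V w (φ.neg.dia.box))) ∨
    (¬ ModalFormula.sat R V w (φ.box.dia) ∧
       ModalFormula.sat R V w (φ.neg.box.dia) ∧
       ¬ (ModalFormula.sat R V w (φ.dia.box) ∧
            ModalFormula.sat R V w (φ.neg.dia.box))) ∨
    (¬ ModalFormula.sat R V w (φ.box.dia) ∧
       ¬ ModalFormula.sat R V w (φ.neg.box.dia) ∧
       (ModalFormula.sat R V w (φ.dia.box) ∧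
          ModalFormula.sat R V w (φ.neg.dia.box))) := by
  have hexcl := not_sat_box_dia_and_neg_box_dia (V := V) (ψ := φ) (hdir w)
  rw [sat_dia_box_iff_not_sat_neg_box_dia, sat_neg_dia_box_iff_not_sat_box_dia]
  tauto

/-- over a directed partial pre-order, at every world each
formula φ is exactly one of: a button (◇□φ), the negation of a button
(◇□¬φ), or a switch (□◇φ ∧ □◇¬φ). -/
theorem button_negbutton_or_switch {W α : Type} (R : W → W → Prop)
    (hrefl : Reflexive R) (htrans : Transitive R)
    (hdir : ∀ w u v, R w u → R w v → ∃ z, R u z ∧ R v z)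
    (V : α → W → Prop) (φ : ModalFormula α) (w : W) :
    (ModalFormula.sat R V w (φ.box.dia) ∧
       ¬ ModalFormula.sat R V w (φ.neg.box.dia) ∧
       ¬ (ModalFormula.sat R V w (φ.dia.box) ∧
            ModalFormula.sat R V w (φ.neg.dia.box))) ∨
    (¬ ModalFormula.sat R V w (φ.box.dia) ∧
       ModalFormula.sat R V w (φ.neg.box.dia) ∧
       ¬ (ModalFormula.sat R V w (φ.dia.box) ∧
            ModalFormula.sat R V w (φ.neg.dia.box))) ∨
    (¬ ModalFormula.sat R V w (φ.box.dia) ∧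
       ¬ ModalFormula.sat R V w (φ.neg.box.dia) ∧
       (ModalFormula.sat R V w (φ.dia.box) ∧
          ModalFormula.sat R V w (φ.neg.dia.box))) :=
  button_negbutton_or_switch_general R hdir V φ w
end

section
/- Suppose M is a Kripke model whose frame F is a finite partial pre-order, w₀ is a world of M, and N is a Kripke model satisfying S4 at a world u₀ together with the Jankov-Fine formula δ(F) ∧ p_{w₀}. Then there is an assignment of the propositional variables q_i of M to formulas ψ_i (Boolean combinations of the p_w) such that for every modal formula φ: (M,w₀) ⊨ φ(q₀,…,q_n) if and only if (N,u₀) ⊨ φ(ψ₀,…,ψ_n). -/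
/-- Uniform substitution of formulas for propositional variables. -/
def ModalFormula.substF {α β : Type} (σ : α → ModalFormula β) :
    ModalFormula α → ModalFormula β
  | .var p => σ p
  | .fls => .fls
  | .imp φ ψ => (substF σ φ).imp (substF σ ψ)
  | .box φ => (substF σ φ).box

open ModalFormula

/-- Finite disjunction of variables from a list. -/
def bigOr {α : Type} (l : List α) : ModalFormula α :=
  l.foldr (fun w acc => (ModalFormula.var w).disj acc) ModalFormula.fls

lemma sat_disj {α W : Type} (R : W → W → Prop) (V : α → W → Prop) (w : W)
    (φ ψ : ModalFormula α) :
    sat R V w (φ.disj ψ) ↔ sat R V w φ ∨ sat R V w ψ := by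
  simp only [ModalFormula.disj, ModalFormula.neg, sat]
  tauto

lemma sat_bigOr {α W : Type} (R : W → W → Prop) (V : α → W → Prop) (w : W)
    (l : List α) : sat R V w (bigOr l) ↔ ∃ a ∈ l, V a w := by
  induction l with
  | nil => simp [bigOr, sat]
  | cons a l ih =>
    simp only [bigOr, List.foldr] at ih ⊢
    rw [sat_disj, ih]
    simp [sat]

/-- if M is a Kripke model on a finite partial pre-order
(U, le) with world w₀, and (N, u₀) is a model on a reflexive transitive frame
satisfying the Jankov-Fine formula δ(F) ∧ p_{w₀} (stated semantically: at
every world accessible from u₀ exactly one variable p_w is true, and p_v is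
possible at a world where p_w is true iff le w v; and p_{w₀} is true at u₀),
then there is a substitution q_i ↦ ψ_i (a Boolean combination of the p_w,
here an arbitrary formula in the p_w) such that every modal formula φ has
(M,w₀) ⊨ φ iff (N,u₀) ⊨ φ(ψ₀,…,ψ_n). -/
theorem jankov_fine_translation {ι U W : Type} [Fintype U]
    (le : U → U → Prop) (hle_refl : Reflexive le) (hle_trans : Transitive le)
    (VM : ι → U → Prop) (w₀ : U)
    (R : W → W → Prop) (hR_refl : Reflexive R) (hR_trans : Transitive R)
    (VN : U → W → Prop) (u₀ : W)
    (H0 : VN w₀ u₀)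
    (H1 : ∀ v, R u₀ v → ∃! w : U, VN w v)
    (H2 : ∀ v, R u₀ v → ∀ w w' : U, VN w v →
      (le w w' ↔ ∃ v', R v v' ∧ VN w' v')) :
    ∃ ψ : ι → ModalFormula U, ∀ φ : ModalFormula ι,
      ModalFormula.sat le VM w₀ φ ↔
        ModalFormula.sat R VN u₀ (ModalFormula.substF ψ φ) := by
  classical
  refine ⟨fun i => bigOr ((Finset.univ.filter (fun w => VM i w)).toList), ?_⟩
  have key : ∀ φ : ModalFormula ι, ∀ v w, R u₀ v → VN w v →
      (sat le VM w φ ↔ sat R VN v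
        (substF (fun i => bigOr ((Finset.univ.filter (fun w => VM i w)).toList)) φ)) := by
    intro φ
    induction φ with
    | var i =>
      intro v w hv hw
      simp only [substF, sat_bigOr, Finset.mem_toList, Finset.mem_filter,
        Finset.mem_univ, true_and]
      constructor
      · intro h; exact ⟨w, h, hw⟩
      · rintro ⟨a, ha, hav⟩
        obtain ⟨x, -, hx⟩ := H1 v hv
        have : a = w := (hx a hav).trans (hx w hw).symm
        simpa [sat, this] using ha
    | fls => intro v w hv hw; simp [substF, sat]
    | imp φ₁ φ₂ ih₁ ih₂ =>
      intro v w hv hw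
      simp only [substF, sat]
      rw [ih₁ v w hv hw, ih₂ v w hv hw]
    | box φ ih =>
      intro v w hv hw
      simp only [substF, sat]
      constructor
      · intro h v' hvv'
        have hv' : R u₀ v' := hR_trans hv hvv'
        obtain ⟨w', hw', -⟩ := H1 v' hv'
        have hle : le w w' := (H2 v hv w w' hw).2 ⟨v', hvv', hw'⟩
        exact (ih v' w' hv' hw').1 (h w' hle)
      · intro h w' hle
        obtain ⟨v', hvv', hw'⟩ := (H2 v hv w w' hw).1 hle
        exact (ih v' w' (hR_trans hv hvv') hw').2 (h v' hvv')
  intro φ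
  exact key φ u₀ w₀ (hR_refl u₀) H0
end

section
/- For any positive integers n and m, there exists a finite Kripke model N whose frame is a pre-Boolean algebra (a partial pre-order whose quotient by mutual accessibility is a Boolean algebra), such that at any initial world of N there is an independent family of n buttons and m switches. -/
open ModalFormula

/-- for positive n, m there is a finite Kripke model whose frame
is a pre-Boolean algebra (a reflexive transitive relation whose quotient by
mutual accessibility is a Boolean algebra, witnessed by a surjection onto a
Boolean algebra reflecting the order), with buttons b_i = var (inl i) and
switches s_j = var (inr j), such that at any initial world (one in the minimal
cluster) the family of n buttons and m switches is independent: no button is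
necessary there, and necessarily, from any pattern (A,B) of pushed buttons
and switch values, any larger button pattern A' ⊇ A together with any switch
pattern B' is possible. -/
theorem exists_preBoolean_model_with_independent_buttons_switches
    (n m : ℕ) (hn : 0 < n) (hm : 0 < m) :
    ∃ (W : Type) (R : W → W → Prop) (V : (Fin n ⊕ Fin m) → W → Prop),
      Finite W ∧ Reflexive R ∧ Transitive R ∧
      (∃ (β : Type) (_ : BooleanAlgebra β) (q : W → β),
        Function.Surjective q ∧ ∀ w v, R w v ↔ q w ≤ q v) ∧
      (∀ u : W, (∀ w, R w u → R u w) →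
        ((∀ i : Fin n,
            ¬ ModalFormula.sat R V u ((var (Sum.inl i)).box)) ∧
         (∀ v, R u v → ∀ (A : Finset (Fin n)) (B : Finset (Fin m)),
           ((∀ i, i ∈ A ↔ ModalFormula.sat R V v ((var (Sum.inl i)).box)) ∧
             (∀ j, j ∈ B ↔ V (Sum.inr j) v)) →
           ∀ (A' : Finset (Fin n)) (B' : Finset (Fin m)), A ⊆ A' →
             ∃ v', R v v' ∧
               (∀ i, i ∈ A' ↔
                  ModalFormula.sat R V v' ((var (Sum.inl i)).box)) ∧
               (∀ j, j ∈ B' ↔ V (Sum.inr j) v')))) := by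

  classical
  refine ⟨Finset (Fin n) × Finset (Fin m), fun w v => w.1 ⊆ v.1,
    fun p w => match p with
      | Sum.inl i => i ∈ w.1
      | Sum.inr j => j ∈ w.2, ?_, ?_, ?_, ?_, ?_⟩
  · infer_instance
  · intro w; exact subset_rfl
  · intro a b c hab hbc; exact hab.trans hbc
  · exact ⟨Finset (Fin n), inferInstance, Prod.fst,
      fun A => ⟨(A, ∅), rfl⟩, fun w v => Iff.rfl⟩
  · intro u hu
    have hbox : ∀ (w : Finset (Fin n) × Finset (Fin m)) (i : Fin n),
        ModalFormula.sat (fun w v => w.1 ⊆ v.1)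
          (fun p w => match p with
            | Sum.inl i => i ∈ w.1
            | Sum.inr j => j ∈ w.2) w ((var (Sum.inl i)).box) ↔ i ∈ w.1 := by
      intro w i
      constructor
      · intro h; exact h w subset_rfl
      · intro hi v hv; exact hv hi
    have hu0 : u.1 = ∅ := by
      have := hu (∅, ∅) (by simp)
      exact Finset.subset_empty.mp this
    constructor
    · intro i h
      have := (hbox u i).mp h
      rw [hu0] at this
      exact absurd this (Finset.notMem_empty i)
    · intro v _ A B ⟨hA, hB⟩ A' B' hAA'
      have hvA : v.1 = A := by
        ext i; rw [hA i, hbox]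
      refine ⟨(A', B'), ?_, ?_, ?_⟩
      · simpa [hvA] using hAA'
      · intro i; rw [hbox]
      · intro j; rfl
end

section
/- In the frame F = P(n) × P(m) ordered by inclusion in the first coordinate, with buttons b_i true at (A,B) iff i∈A and switches s_j true at (A,B) iff j∈B: every b_i is a button (◇□b_i holds at every world) and every s_j is a switch (□◇s_j and □◇¬s_j hold at every world). -/
open ModalFormula

/-- in the frame P(n) × P(m), ordered by inclusion on the first
coordinate, with b_i true at (A,B) iff i ∈ A and s_j true at (A,B) iff j ∈ B:
every b_i is a button (◇□b_i everywhere) and every s_j is a switch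
(□◇s_j and □◇¬s_j everywhere). -/
theorem buttons_and_switches_in_powerset_frame (n m : ℕ) :
    let W := Finset (Fin n) × Finset (Fin m)
    let R : W → W → Prop := fun w v => w.1 ⊆ v.1
    let V : (Fin n ⊕ Fin m) → W → Prop := fun p w =>
      match p with
      | Sum.inl i => i ∈ w.1
      | Sum.inr j => j ∈ w.2
    ∀ w : W,
      (∀ i : Fin n, ModalFormula.sat R V w ((var (Sum.inl i)).box.dia)) ∧
      (∀ j : Fin m, ModalFormula.sat R V w ((var (Sum.inr j)).dia.box) ∧
        ModalFormula.sat R V w ((var (Sum.inr j)).neg.dia.box)) := by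
  intro W R V w
  refine ⟨fun i => ?_, fun j => ⟨fun v _ => ?_, fun v _ => ?_⟩⟩ <;>
    simp only [dia, neg, sat]
  all_goals intro h
  · exact h (insert i w.1, w.2) (Finset.subset_insert _ _)
      (fun u hu => hu (Finset.mem_insert_self i w.1))
  · exact h (v.1, insert j v.2) (Finset.Subset.refl _)
      (Finset.mem_insert_self j v.2)
  · exact h (v.1, ∅) (Finset.Subset.refl _)
      (fun c => Finset.notMem_empty j c)
end

section
/- Suppose a Kripke model (N,u₀) on a reflexive transitive frame has two semi-independent buttons b₀, b₁: both ◇□b₀ and ◇□b₁ hold but neither □b₀ nor □b₁ holds at u₀, ◇□(b₀∧b₁) holds at u₀, and ◇(□b₀ ∧ ¬□b₁) holds at u₀. Then the axiom W5: ◇□φ → (φ → □φ) fails at u₀ for the substitution φ = (¬□b₀ ∧ ¬□b₁) ∨ □(b₀∧b₁). -/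
open ModalFormula

/-- with two semi-independent buttons b₀, b₁ at u₀ on a
reflexive transitive frame (neither pushed, both jointly pushable, and b₀
pushable without pushing b₁), axiom W5 fails at u₀ for
φ = (¬□b₀ ∧ ¬□b₁) ∨ □(b₀∧b₁): φ and ◇□φ hold but □φ fails. -/
theorem W5_fails_with_semi_independent_buttons {W α : Type}
    (R : W → W → Prop) (hrefl : Reflexive R) (htrans : Transitive R)
    (V : α → W → Prop) (u₀ : W) (b₀ b₁ : ModalFormula α)
    (h0 : ¬ ModalFormula.sat R V u₀ (b₀.box))
    (h1 : ¬ ModalFormula.sat R V u₀ (b₁.box))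
    (hpushboth : ModalFormula.sat R V u₀ (((b₀.conj b₁).box).dia))
    (hsemi : ∃ v, R u₀ v ∧ ModalFormula.sat R V v (b₀.box) ∧
      ¬ ModalFormula.sat R V v (b₁.box)) :
    ModalFormula.sat R V u₀
        (((b₀.box.neg).conj (b₁.box.neg)).disj ((b₀.conj b₁).box)) ∧
      ModalFormula.sat R V u₀
        (((((b₀.box.neg).conj (b₁.box.neg)).disj ((b₀.conj b₁).box)).box).dia) ∧
      ¬ ModalFormula.sat R V u₀
        ((((b₀.box.neg).conj (b₁.box.neg)).disj ((b₀.conj b₁).box)).box) := by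
  classical
  obtain ⟨v, hv, hvb0, hvb1⟩ := hsemi
  simp only [sat, neg, dia, conj, disj] at *
  refine ⟨?_, ?_, ?_⟩
  · intro h; exact (h (fun k => k h0 h1)).elim
  · intro hall
    apply hpushboth
    intro w hw hbox
    refine hall w hw ?_
    intro u hu _ x hx
    exact hbox x (htrans hu hx)
  · intro hall
    have hB := hall v hv (fun hA => hA (fun hn0 _ => hn0 hvb0))
    apply hvb1
    intro u hu
    by_contra hb1
    exact hB u hu (fun _ hb => hb1 hb)
end

section
/- Suppose at a world u₀ of a Kripke model on a reflexive transitive frame there are two independent buttons b₁, b₂: neither is necessary at u₀, and necessarily each can be made necessary without making the other necessary. Then the axiom .3 fails at u₀: with φ = □b₁ ∧ ¬□b₂ and ψ = □b₂ ∧ ¬□b₁, we have ◇φ ∧ ◇ψ at u₀, but none of ◇(φ∧◇ψ), ◇(φ∧ψ), ◇(ψ∧◇φ) holds at u₀. -/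
open ModalFormula

namespace ModalFormula
variable {α : Type}
lemma sat_neg_s16 {W : Type} (R : W → W → Prop) (V : α → W → Prop) (w : W) (φ : ModalFormula α) :
    sat R V w φ.neg ↔ ¬ sat R V w φ := by simp [neg, sat]

lemma sat_conj {W : Type} (R : W → W → Prop) (V : α → W → Prop) (w : W) (φ ψ : ModalFormula α) :
    sat R V w (φ.conj ψ) ↔ sat R V w φ ∧ sat R V w ψ := by
  simp [conj, neg, sat]

lemma sat_dia_s16 {W : Type} (R : W → W → Prop) (V : α → W → Prop) (w : W) (φ : ModalFormula α) :
    sat R V w φ.dia ↔ ∃ v, R w v ∧ sat R V v φ := by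
  simp [dia, neg, sat]
end ModalFormula



/-- with two independent buttons b₁, b₂ at u₀ on a reflexive
transitive frame, the axiom .3 fails at u₀ for φ = □b₁ ∧ ¬□b₂ and
ψ = □b₂ ∧ ¬□b₁: ◇φ ∧ ◇ψ holds but none of ◇(φ∧◇ψ), ◇(φ∧ψ), ◇(ψ∧◇φ) do. -/
theorem point3_fails_with_independent_buttons {W α : Type}
    (R : W → W → Prop) (hrefl : Reflexive R) (htrans : Transitive R)
    (V : α → W → Prop) (u₀ : W) (b₁ b₂ : ModalFormula α)
    (h1 : ¬ ModalFormula.sat R V u₀ (b₁.box))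
    (h2 : ¬ ModalFormula.sat R V u₀ (b₂.box))
    (hpush1 : ModalFormula.sat R V u₀ (((b₁.box).conj (b₂.box.neg)).dia))
    (hpush2 : ModalFormula.sat R V u₀ (((b₂.box).conj (b₁.box.neg)).dia))
    (hpersist12 : ModalFormula.sat R V u₀
      ((((b₁.box).conj (b₂.box.neg)).imp
        ((((b₂.box).conj (b₁.box.neg)).neg).box)).box))
    (hpersist21 : ModalFormula.sat R V u₀
      ((((b₂.box).conj (b₁.box.neg)).imp
        ((((b₁.box).conj (b₂.box.neg)).neg).box)).box)) :
    ModalFormula.sat R V u₀ (((b₁.box).conj (b₂.box.neg)).dia) ∧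
    ModalFormula.sat R V u₀ (((b₂.box).conj (b₁.box.neg)).dia) ∧
    ¬ ModalFormula.sat R V u₀
        ((((b₁.box).conj (b₂.box.neg)).conj
          (((b₂.box).conj (b₁.box.neg)).dia)).dia) ∧
    ¬ ModalFormula.sat R V u₀
        ((((b₁.box).conj (b₂.box.neg)).conj
          ((b₂.box).conj (b₁.box.neg))).dia) ∧
    ¬ ModalFormula.sat R V u₀
        ((((b₂.box).conj (b₁.box.neg)).conj
          (((b₁.box).conj (b₂.box.neg)).dia)).dia) := by

  refine ⟨hpush1, hpush2, ?_, ?_, ?_⟩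
  · rw [sat_dia_s16]
    rintro ⟨v, hv, h⟩
    rw [sat_conj] at h
    obtain ⟨hφ, hd⟩ := h
    rw [sat_dia_s16] at hd
    obtain ⟨w, hw, hψ⟩ := hd
    have := hpersist12 v hv hφ w hw
    rw [sat_neg_s16] at this
    exact this hψ
  · rw [sat_dia_s16]
    rintro ⟨v, hv, h⟩
    rw [sat_conj, sat_conj, sat_conj] at h
    obtain ⟨⟨hb1, hn2⟩, ⟨hb2, hn1⟩⟩ := h
    rw [sat_neg_s16] at hn1
    exact hn1 hb1
  · rw [sat_dia_s16]
    rintro ⟨v, hv, h⟩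
    rw [sat_conj] at h
    obtain ⟨hψ, hd⟩ := h
    rw [sat_dia_s16] at hd
    obtain ⟨w, hw, hφ⟩ := hd
    have := hpersist21 v hv hψ w hw
    rw [sat_neg_s16] at this
    exact this hφ
end

section
/- Let M₀ be a Kripke model whose frame F₀ is a finite directed partial pre-order with a largest cluster [b], and let w₀ lie in the smallest cluster. Form the partial unravelling F: keep the top cluster [b], and replace each other world u by pairs (u,t) where t is a maximal chain from [w₀] to [u] in the quotient order, ordered by end-extension of paths (and the F₀-order within clusters), with [b] above everything. Then F is a baled pre-tree, and the natural correspondence (copying valuations from u to each (u,t)) is a bisimulation between the resulting model M and M₀; consequently the same modal formulas hold at w₀ in M₀ and at any copy of w₀ in M. -/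
open ModalFormula

/-- Mutual accessibility: u and v lie in the same cluster. -/
def equivRel {F₀ : Type} (R₀ : F₀ → F₀ → Prop) (u v : F₀) : Prop :=
  R₀ u v ∧ R₀ v u

/-- t is a path from the cluster of w₀ to the cluster of u: a maximal
linearly-ordered, cluster-closed subset of the interval [[w₀],[u]]
(working with unions of clusters instead of the quotient order). -/
def IsPath {F₀ : Type} (R₀ : F₀ → F₀ → Prop) (w₀ u : F₀) (t : Set F₀) : Prop :=
  t ⊆ {x | R₀ w₀ x ∧ R₀ x u} ∧
  (∀ x ∈ t, ∀ y, equivRel R₀ x y → y ∈ t) ∧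
  (∀ x ∈ t, ∀ y ∈ t, R₀ x y ∨ R₀ y x) ∧
  (∀ s : Set F₀, t ⊆ s → s ⊆ {x | R₀ w₀ x ∧ R₀ x u} →
    (∀ x ∈ s, ∀ y, equivRel R₀ x y → y ∈ s) →
    (∀ x ∈ s, ∀ y ∈ s, R₀ x y ∨ R₀ y x) → s = t)

/-- The partial unravelling of the frame (F₀, R₀) from w₀, keeping the top
cluster [b] intact and replacing every other world u by pairs (u, t) where t
is a path from [w₀] to [u]. -/
def Unravel {F₀ : Type} (R₀ : F₀ → F₀ → Prop) (w₀ b : F₀) : Type :=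
  {x : F₀ // equivRel R₀ x b} ⊕
    {p : F₀ × Set F₀ // ¬ equivRel R₀ p.1 b ∧ IsPath R₀ w₀ p.1 p.2}

/-- Accessibility on the unravelling: within the top cluster everything is
related; (u,t) ≤ (v,s) iff t end-extends to s (here: t ⊆ s, paths being
initial chains from the root) and R₀ u v; and the top cluster is maximal. -/
def unravelRel {F₀ : Type} (R₀ : F₀ → F₀ → Prop) (w₀ b : F₀) :
    Unravel R₀ w₀ b → Unravel R₀ w₀ b → Prop
  | Sum.inl _, Sum.inl _ => True
  | Sum.inl _, Sum.inr _ => False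
  | Sum.inr _, Sum.inl _ => True
  | Sum.inr p, Sum.inr q => p.1.2 ⊆ q.1.2 ∧ R₀ p.1.1 q.1.1

/-- The projection sending each world of the unravelling to the world of F₀
it is a copy of. -/
def unravelProj {F₀ : Type} (R₀ : F₀ → F₀ → Prop) (w₀ b : F₀) :
    Unravel R₀ w₀ b → F₀
  | Sum.inl x => x.1
  | Sum.inr p => p.1.1

/-!
A path is a maximal cluster-closed chain of its interval, so it absorbs every cluster-closed chain
of the interval comparable with it: hence it contains [w₀] and the cluster of its endpoint, and two
paths lying in one chain are nested as their endpoints are. The latter makes the predecessors of a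
copy (u, t) linearly ordered, all their paths lying in t. Since F₀ is finite, every path extends
to a path ending at any later world, which is the back condition for the projection; so the
projection is a bounded morphism, and bounded morphisms preserve modal truth.
-/

def IsBoundedMorphism {W W₀ : Type} (R : W → W → Prop) (R₀ : W₀ → W₀ → Prop) (π : W → W₀) :
    Prop :=
  (∀ f g, R f g → R₀ (π f) (π g)) ∧ ∀ f v, R₀ (π f) v → ∃ g, R f g ∧ π g = v

theorem IsBoundedMorphism.sat_iff {α W W₀ : Type} {R : W → W → Prop} {R₀ : W₀ → W₀ → Prop}
    {π : W → W₀} (hπ : IsBoundedMorphism R R₀ π) (V₀ : α → W₀ → Prop) (φ : ModalFormula α)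
    (f : W) : sat R (fun a g => V₀ a (π g)) f φ ↔ sat R₀ V₀ (π f) φ := by
  induction φ generalizing f with
  | var p => exact Iff.rfl
  | fls => exact Iff.rfl
  | imp φ ψ ihφ ihψ => exact imp_congr (ihφ f) (ihψ f)
  | box φ ih =>
    constructor
    · intro h v hv
      obtain ⟨g, hfg, rfl⟩ := hπ.2 f v hv
      exact (ih g).1 (h g hfg)
    · exact fun h g hfg => (ih g).2 (h (π g) (hπ.1 f g hfg))

section Paths

variable {F₀ : Type} {R₀ : F₀ → F₀ → Prop} {w₀ u : F₀} {s t : Set F₀}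

theorem IsPath.subset_of_comparable (ht : IsPath R₀ w₀ u t)
    (hs : s ⊆ {x | R₀ w₀ x ∧ R₀ x u}) (hcl : ∀ x ∈ s, ∀ y, equivRel R₀ x y → y ∈ s)
    (hch : ∀ x ∈ s, ∀ y ∈ s, R₀ x y ∨ R₀ y x) (hcmp : ∀ x ∈ t, ∀ y ∈ s, R₀ x y ∨ R₀ y x) :
    s ⊆ t := by
  obtain ⟨htI, htcl, htch, htmax⟩ := ht
  have hunion : t ∪ s = t := by
    refine htmax _ Set.subset_union_left (Set.union_subset htI hs) ?_ ?_
    · rintro x (hx | hx) y hxy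
      exacts [Or.inl (htcl x hx y hxy), Or.inr (hcl x hx y hxy)]
    · rintro x (hx | hx) y (hy | hy)
      exacts [htch x hx y hy, hcmp x hx y hy, (hcmp y hy x hx).symm, hch x hx y hy]
  exact hunion ▸ Set.subset_union_right

theorem IsPath.mem (hrefl : ∀ x, R₀ x x) (htrans : ∀ ⦃x y z⦄, R₀ x y → R₀ y z → R₀ x z)
    (hw₀ : ∀ u, R₀ w₀ u) (ht : IsPath R₀ w₀ u t) : u ∈ t := by
  refine ht.subset_of_comparable (s := {y | equivRel R₀ u y}) ?_ ?_ ?_ ?_ ⟨hrefl u, hrefl u⟩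
  · exact fun y hy => ⟨hw₀ y, hy.2⟩
  · exact fun x hx y hxy => ⟨htrans hx.1 hxy.1, htrans hxy.2 hx.2⟩
  · exact fun x hx y hy => Or.inl (htrans hx.2 hy.1)
  · exact fun x hx y hy => Or.inl (htrans (ht.1 hx).2 hy.1)

theorem IsPath.cluster_subset (htrans : ∀ ⦃x y z⦄, R₀ x y → R₀ y z → R₀ x z)
    (hw₀ : ∀ u, R₀ w₀ u) (ht : IsPath R₀ w₀ u t) : {x | equivRel R₀ w₀ x} ⊆ t := by
  refine ht.subset_of_comparable ?_ ?_ ?_ ?_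
  · exact fun x hx => ⟨hx.1, htrans hx.2 (hw₀ u)⟩
  · exact fun x hx y hxy => ⟨htrans hx.1 hxy.1, htrans hxy.2 hx.2⟩
  · exact fun x hx y hy => Or.inl (htrans hx.2 hy.1)
  · exact fun x hx y hy => Or.inr (htrans hy.2 (ht.1 hx).1)

theorem isPath_cluster_self (htrans : ∀ ⦃x y z⦄, R₀ x y → R₀ y z → R₀ x z) :
    IsPath R₀ w₀ w₀ {x | equivRel R₀ w₀ x} :=
  ⟨fun _ hx => hx, fun _ hx _ hxy => ⟨htrans hx.1 hxy.1, htrans hxy.2 hx.2⟩,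
    fun _ hx _ hy => Or.inl (htrans hx.2 hy.1), fun _ hts hs _ _ => hs.antisymm hts⟩

theorem IsPath.subset_of_subset_chain (htrans : ∀ ⦃x y z⦄, R₀ x y → R₀ y z → R₀ x z)
    {v : F₀} {s' : Set F₀} (hs : IsPath R₀ w₀ u s) (ht : IsPath R₀ w₀ v t) (hss' : s ⊆ s')
    (hts' : t ⊆ s') (hch : ∀ x ∈ s', ∀ y ∈ s', R₀ x y ∨ R₀ y x) (huv : R₀ u v) : s ⊆ t :=
  ht.subset_of_comparable (fun _ hx => ⟨(hs.1 hx).1, htrans (hs.1 hx).2 huv⟩) hs.2.1 hs.2.2.1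
    fun _ hx _ hy => hch _ (hts' hx) _ (hss' hy)

theorem exists_isPath_superset [Finite F₀] (hs : s ⊆ {x | R₀ w₀ x ∧ R₀ x u})
    (hcl : ∀ x ∈ s, ∀ y, equivRel R₀ x y → y ∈ s) (hch : ∀ x ∈ s, ∀ y ∈ s, R₀ x y ∨ R₀ y x) :
    ∃ t, s ⊆ t ∧ IsPath R₀ w₀ u t := by
  set S : Set (Set F₀) := {t | s ⊆ t ∧ t ⊆ {x | R₀ w₀ x ∧ R₀ x u} ∧
    (∀ x ∈ t, ∀ y, equivRel R₀ x y → y ∈ t) ∧ ∀ x ∈ t, ∀ y ∈ t, R₀ x y ∨ R₀ y x}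
  obtain ⟨t, ⟨hst, htI, htcl, htch⟩, htmax⟩ :=
    S.toFinite.exists_maximalFor id S ⟨s, subset_rfl, hs, hcl, hch⟩
  exact ⟨t, hst, htI, htcl, htch, fun r htr hrI hrcl hrch =>
    (htmax ⟨hst.trans htr, hrI, hrcl, hrch⟩ htr).antisymm htr⟩

theorem IsPath.exists_extension [Finite F₀] (htrans : ∀ ⦃x y z⦄, R₀ x y → R₀ y z → R₀ x z)
    {v : F₀} (ht : IsPath R₀ w₀ u t) (huv : R₀ u v) : ∃ s, t ⊆ s ∧ IsPath R₀ w₀ v s :=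
  exists_isPath_superset (fun _ hx => ⟨(ht.1 hx).1, htrans (ht.1 hx).2 huv⟩) ht.2.1 ht.2.2.1

end Paths

section Unravelling

variable {F₀ : Type} {R₀ : F₀ → F₀ → Prop} {w₀ b : F₀}

theorem unravelRel_refl (hrefl : ∀ x, R₀ x x) (f : Unravel R₀ w₀ b) : unravelRel R₀ w₀ b f f := by
  cases f
  exacts [trivial, ⟨subset_rfl, hrefl _⟩]

theorem unravelRel_trans (htrans : ∀ ⦃x y z⦄, R₀ x y → R₀ y z → R₀ x z) :
    ∀ ⦃f g h⦄, unravelRel R₀ w₀ b f g → unravelRel R₀ w₀ b g h → unravelRel R₀ w₀ b f h := by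
  rintro (_ | _) (_ | _) (_ | _) hxy hyz <;> first
    | trivial | exact hxy.elim | exact hyz.elim | exact ⟨hxy.1.trans hyz.1, htrans hxy.2 hyz.2⟩

theorem unravelRel_inl (f : Unravel R₀ w₀ b) (x : {x : F₀ // equivRel R₀ x b}) :
    unravelRel R₀ w₀ b f (Sum.inl x) := by
  cases f <;> trivial

theorem unravelRel_total_of_le (hrefl : ∀ x, R₀ x x)
    (htrans : ∀ ⦃x y z⦄, R₀ x y → R₀ y z → R₀ x z) (hw₀ : ∀ u, R₀ w₀ u)
    (p q r : {p : F₀ × Set F₀ // ¬ equivRel R₀ p.1 b ∧ IsPath R₀ w₀ p.1 p.2})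
    (hqp : unravelRel R₀ w₀ b (Sum.inr q) (Sum.inr p))
    (hrp : unravelRel R₀ w₀ b (Sum.inr r) (Sum.inr p)) :
    unravelRel R₀ w₀ b (Sum.inr q) (Sum.inr r) ∨ unravelRel R₀ w₀ b (Sum.inr r) (Sum.inr q) := by
  have hchain := p.2.2.2.2.1
  have hq := q.2.2
  have hr := r.2.2
  rcases hchain _ (hqp.1 (hq.mem hrefl htrans hw₀)) _ (hrp.1 (hr.mem hrefl htrans hw₀)) with h | h
  · exact Or.inl ⟨hq.subset_of_subset_chain htrans hr hqp.1 hrp.1 hchain h, h⟩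
  · exact Or.inr ⟨hr.subset_of_subset_chain htrans hq hrp.1 hqp.1 hchain h, h⟩

/-- The root is the top cluster itself when `w₀` lies in it, and otherwise the copy of `w₀`
along the one-cluster path `[w₀]`. -/
theorem exists_unravelRel_root (htrans : ∀ ⦃x y z⦄, R₀ x y → R₀ y z → R₀ x z)
    (hw₀ : ∀ u, R₀ w₀ u) (hb : ∀ u, R₀ u b) :
    ∃ f₀ : Unravel R₀ w₀ b, ∀ f, unravelRel R₀ w₀ b f₀ f := by
  by_cases hw₀b : equivRel R₀ w₀ b
  · refine ⟨Sum.inl ⟨w₀, hw₀b⟩, ?_⟩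
    rintro (x | p)
    · trivial
    · exact p.2.1 ⟨hb _, htrans hw₀b.2 (hw₀ _)⟩
  · refine ⟨Sum.inr ⟨(w₀, {x | equivRel R₀ w₀ x}), hw₀b, isPath_cluster_self htrans⟩, ?_⟩
    rintro (x | p)
    · trivial
    · exact ⟨p.2.2.cluster_subset htrans hw₀, hw₀ _⟩

theorem unravelProj_isBoundedMorphism [Finite F₀]
    (htrans : ∀ ⦃x y z⦄, R₀ x y → R₀ y z → R₀ x z) (hb : ∀ u, R₀ u b) :
    IsBoundedMorphism (unravelRel R₀ w₀ b) R₀ (unravelProj R₀ w₀ b) := by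
  constructor
  · rintro (x | p) (y | q) h
    exacts [htrans x.2.1 y.2.2, h.elim, htrans (hb _) y.2.2, h.2]
  · rintro (x | p) v hv
    · exact ⟨Sum.inl ⟨v, hb v, htrans x.2.2 hv⟩, trivial, rfl⟩
    · by_cases hvb : equivRel R₀ v b
      · exact ⟨Sum.inl ⟨v, hvb⟩, trivial, rfl⟩
      · obtain ⟨s, hts, hs⟩ := p.2.2.exists_extension htrans hv
        exact ⟨Sum.inr ⟨(v, s), hvb, hs⟩, ⟨hts, hv⟩, rfl⟩

end Unravelling

theorem partial_unravelling_baled_pretree_and_bisimulation_general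
    {α F₀ : Type} [Fintype F₀] (R₀ : F₀ → F₀ → Prop)
    (hrefl : Reflexive R₀) (htrans : Transitive R₀)
    (w₀ b : F₀) (hw₀ : ∀ u, R₀ w₀ u) (hb : ∀ u, R₀ u b)
    (V₀ : α → F₀ → Prop) :
    -- F is a baled pre-tree:
    Reflexive (unravelRel R₀ w₀ b) ∧
    Transitive (unravelRel R₀ w₀ b) ∧
    (∀ (f : Unravel R₀ w₀ b) (x : {x : F₀ // equivRel R₀ x b}),
      unravelRel R₀ w₀ b f (Sum.inl x)) ∧
    (∀ (p q r : {p : F₀ × Set F₀ //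
        ¬ equivRel R₀ p.1 b ∧ IsPath R₀ w₀ p.1 p.2}),
      unravelRel R₀ w₀ b (Sum.inr q) (Sum.inr p) →
      unravelRel R₀ w₀ b (Sum.inr r) (Sum.inr p) →
      unravelRel R₀ w₀ b (Sum.inr q) (Sum.inr r) ∨
        unravelRel R₀ w₀ b (Sum.inr r) (Sum.inr q)) ∧
    (∃ f₀ : Unravel R₀ w₀ b, ∀ f, unravelRel R₀ w₀ b f₀ f) ∧
    -- the projection is a bisimulation between M and M₀:
    (∀ (f : Unravel R₀ w₀ b) (a : α),
      (fun a g => V₀ a (unravelProj R₀ w₀ b g)) a f ↔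
        V₀ a (unravelProj R₀ w₀ b f)) ∧
    (∀ f g : Unravel R₀ w₀ b, unravelRel R₀ w₀ b f g →
      R₀ (unravelProj R₀ w₀ b f) (unravelProj R₀ w₀ b g)) ∧
    (∀ (f : Unravel R₀ w₀ b) (v : F₀), R₀ (unravelProj R₀ w₀ b f) v →
      ∃ g, unravelRel R₀ w₀ b f g ∧ unravelProj R₀ w₀ b g = v) ∧
    -- consequently every copy of w₀ satisfies the same modal formulas as w₀:
    (∀ f : Unravel R₀ w₀ b, unravelProj R₀ w₀ b f = w₀ →
      ∀ φ : ModalFormula α,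
        ModalFormula.sat (unravelRel R₀ w₀ b)
            (fun a g => V₀ a (unravelProj R₀ w₀ b g)) f φ ↔
          ModalFormula.sat R₀ V₀ w₀ φ) := by
  have hπ := unravelProj_isBoundedMorphism (w₀ := w₀) htrans hb
  refine ⟨unravelRel_refl hrefl, unravelRel_trans htrans, unravelRel_inl,
    unravelRel_total_of_le hrefl htrans hw₀, exists_unravelRel_root htrans hw₀ hb,
    fun _ _ => Iff.rfl, hπ.1, hπ.2, ?_⟩
  intro f hf φ
  rw [hπ.sat_iff V₀ φ f, hf]

/-- for a Kripke model M₀ on a finite directed partial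
pre-order F₀ with largest cluster [b] and with w₀ in the smallest cluster,
the partial unravelling F (with copied valuation) is a baled pre-tree:
the relation is reflexive and transitive, the copies of the top cluster are
maximal, the predecessors of any non-top world are linearly ordered, and
there is a root; moreover the projection is a bisimulation between the
unravelled model M and M₀, so every copy of w₀ in M satisfies exactly the
same modal formulas as w₀ does in M₀. -/
theorem partial_unravelling_baled_pretree_and_bisimulation
    {α F₀ : Type} [Fintype F₀] (R₀ : F₀ → F₀ → Prop)
    (hrefl : Reflexive R₀) (htrans : Transitive R₀)
    (hdir : ∀ u v, ∃ z, R₀ u z ∧ R₀ v z)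
    (w₀ b : F₀) (hw₀ : ∀ u, R₀ w₀ u) (hb : ∀ u, R₀ u b)
    (V₀ : α → F₀ → Prop) :
    -- F is a baled pre-tree:
    Reflexive (unravelRel R₀ w₀ b) ∧
    Transitive (unravelRel R₀ w₀ b) ∧
    (∀ (f : Unravel R₀ w₀ b) (x : {x : F₀ // equivRel R₀ x b}),
      unravelRel R₀ w₀ b f (Sum.inl x)) ∧
    (∀ (p q r : {p : F₀ × Set F₀ //
        ¬ equivRel R₀ p.1 b ∧ IsPath R₀ w₀ p.1 p.2}),
      unravelRel R₀ w₀ b (Sum.inr q) (Sum.inr p) →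
      unravelRel R₀ w₀ b (Sum.inr r) (Sum.inr p) →
      unravelRel R₀ w₀ b (Sum.inr q) (Sum.inr r) ∨
        unravelRel R₀ w₀ b (Sum.inr r) (Sum.inr q)) ∧
    (∃ f₀ : Unravel R₀ w₀ b, ∀ f, unravelRel R₀ w₀ b f₀ f) ∧
    -- the projection is a bisimulation between M and M₀:
    (∀ (f : Unravel R₀ w₀ b) (a : α),
      (fun a g => V₀ a (unravelProj R₀ w₀ b g)) a f ↔
        V₀ a (unravelProj R₀ w₀ b f)) ∧
    (∀ f g : Unravel R₀ w₀ b, unravelRel R₀ w₀ b f g →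
      R₀ (unravelProj R₀ w₀ b f) (unravelProj R₀ w₀ b g)) ∧
    (∀ (f : Unravel R₀ w₀ b) (v : F₀), R₀ (unravelProj R₀ w₀ b f) v →
      ∃ g, unravelRel R₀ w₀ b f g ∧ unravelProj R₀ w₀ b g = v) ∧
    -- consequently every copy of w₀ satisfies the same modal formulas as w₀:
    (∀ f : Unravel R₀ w₀ b, unravelProj R₀ w₀ b f = w₀ →
      ∀ φ : ModalFormula α,
        ModalFormula.sat (unravelRel R₀ w₀ b)
            (fun a g => V₀ a (unravelProj R₀ w₀ b g)) f φ ↔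
          ModalFormula.sat R₀ V₀ w₀ φ) :=
  partial_unravelling_baled_pretree_and_bisimulation_general R₀ hrefl htrans w₀ b hw₀ hb V₀
end
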